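/- For all integers v, w ≥ 2, the Karoubi envelopes of the categories C_v and C_w of finitely generated free Post algebras of valences v and w are equivalent categories. (This expresses the paper's claim that the Lawvere theories Post_v for all v ≥ 2 are Morita equivalent to one another, and in particular to the theory Boole = Post_2 of Boolean algebras.) -/

import Mathlib

/-!
A fully faithful functor `F : C ⥤ D` such that every object of `D` is a retract `(i, r)` of some
`F X` induces an equivalence of Karoubi envelopes: an idempotent `q` on such a retract is
isomorphic in `Karoubi D` to the idempotent `r ≫ q ≫ i` on `F X`, which lifts to `C`. For `v ≥ 2`
every nonempty finite set `S` is a retract of `Fin r → Fin v` as soon as `v ^ r ≥ |S|`, so this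
applies to the inclusion of `C_v` into nonempty finite sets: every `C_v` has the Karoubi envelope
of the category of nonempty finite sets.
-/

open CategoryTheory

/-- The property of a finite type of being (bijective to) a finitely generated
free `v`-valued Post algebra, i.e. of the form `Fin r → Fin v`. -/
def IsPostAlg (v : ℕ) (X : FintypeCat) : Prop :=
  ∃ r : ℕ, Nonempty (X ≃ (Fin r → Fin v))

/-- `C_v`: the full subcategory of the category of finite types spanned by the
types `Fin r → Fin v`; the category of finitely generated free `v`-valued Post
algebras is its opposite. -/
abbrev PostCat (v : ℕ) := ObjectProperty.FullSubcategory (IsPostAlg v)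

universe u

namespace CategoryTheory.Idempotents

variable {C D : Type*} [Category* C] [Category* D] {F : C ⥤ D}

def Karoubi.isoOfRetract {P Q : Karoubi D} (e : Retract Q.X P.X) (h : P.p = e.r ≫ Q.p ≫ e.i) :
    P ≅ Q where
  hom := ⟨e.r ≫ Q.p, by simp [h]⟩
  inv := ⟨Q.p ≫ e.i, by simp [h, reassoc_of% Q.idem]⟩
  hom_inv_id := by ext; simp [h, reassoc_of% Q.idem]
  inv_hom_id := by ext; simp

def _root_.CategoryTheory.Functor.FullyFaithful.functorExtension₂ (hF : F.FullyFaithful) :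
    ((functorExtension₂ C D).obj F).FullyFaithful where
  preimage {P Q} φ :=
    have hφ : F.map (hF.preimage (X := P.X) (Y := Q.X) φ.f) = φ.f := hF.map_preimage _
    ⟨hF.preimage φ.f, hF.map_injective (by rw [F.map_comp, F.map_comp, hφ]; exact φ.comm)⟩
  map_preimage {P Q} φ := by ext; exact hF.map_preimage (X := P.X) (Y := Q.X) φ.f
  preimage_map f := by ext; exact hF.preimage_map f.f

lemma functorExtension₂_obj_essSurj (hF : F.FullyFaithful)
    (hretract : ∀ Y : D, ∃ X : C, Nonempty (Retract Y (F.obj X))) :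
    ((functorExtension₂ C D).obj F).EssSurj where
  mem_essImage Q := by
    obtain ⟨X, ⟨e⟩⟩ := hretract Q.X
    have hp := hF.map_preimage (e.r ≫ Q.p ≫ e.i)
    have idem : (e.r ≫ Q.p ≫ e.i) ≫ e.r ≫ Q.p ≫ e.i = e.r ≫ Q.p ≫ e.i := by
      simp [reassoc_of% Q.idem]
    let P : Karoubi C :=
      ⟨X, hF.preimage (e.r ≫ Q.p ≫ e.i), hF.map_injective (by rw [F.map_comp, hp, idem])⟩
    exact ⟨P, ⟨Karoubi.isoOfRetract e hp⟩⟩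

noncomputable def karoubiEquivalenceOfRetracts (hF : F.FullyFaithful)
    (hretract : ∀ Y : D, ∃ X : C, Nonempty (Retract Y (F.obj X))) : Karoubi C ≌ Karoubi D :=
  have : ((functorExtension₂ C D).obj F).IsEquivalence :=
    { faithful := hF.functorExtension₂.faithful
      full := hF.functorExtension₂.full
      essSurj := functorExtension₂_obj_essSurj hF hretract }
  ((functorExtension₂ C D).obj F).asEquivalence

end CategoryTheory.Idempotents

abbrev NonemptyFintypeCat := ObjectProperty.FullSubcategory fun X : FintypeCat.{u} => Nonempty X

lemma NonemptyFintypeCat.nonempty_retract_of_card_le {Y Z : NonemptyFintypeCat.{u}}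
    (h : Nat.card Y.obj ≤ Nat.card Z.obj) : Nonempty (Retract Y Z) := by
  have := Y.property
  have := Fintype.ofFinite Y.obj
  have := Fintype.ofFinite Z.obj
  rw [Nat.card_eq_fintype_card, Nat.card_eq_fintype_card] at h
  obtain ⟨ι⟩ := Function.Embedding.nonempty_of_card_le h
  exact ⟨{ i := ObjectProperty.homMk (FintypeCat.homMk ι)
           r := ObjectProperty.homMk (FintypeCat.homMk (Function.invFun ι))
           retract := by ext y; exact Function.leftInverse_invFun ι.injective y }⟩

lemma IsPostAlg.nonempty {v : ℕ} (hv : 0 < v) {X : FintypeCat} (h : IsPostAlg v X) :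
    Nonempty X := by
  obtain ⟨r, ⟨e⟩⟩ := h
  exact ⟨e.symm fun _ => ⟨0, hv⟩⟩

namespace PostCat

/-- Landing in universe `0` lets categories `PostCat.{u} v` in different universes be compared. -/
noncomputable def toNonemptyFintypeCat (v : ℕ) (hv : 0 < v) :
    PostCat.{u} v ⥤ NonemptyFintypeCat.{0} :=
  ObjectProperty.lift _ (ObjectProperty.ι (IsPostAlg v) ⋙ FintypeCat.uSwitch) fun X =>
    (X.property.nonempty hv).map X.obj.uSwitchEquiv.symm

noncomputable def fullyFaithfulToNonemptyFintypeCat (v : ℕ) (hv : 0 < v) :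
    (toNonemptyFintypeCat.{u} v hv).FullyFaithful :=
  Functor.FullyFaithful.ofCompFaithful (G := ObjectProperty.ι _)
    ((ObjectProperty.fullyFaithfulι _).comp FintypeCat.uSwitchEquivalence.fullyFaithfulFunctor)

lemma exists_retract_toNonemptyFintypeCat_obj {v : ℕ} (hv : 2 ≤ v) (Y : NonemptyFintypeCat.{0}) :
    ∃ X : PostCat.{u} v, Nonempty (Retract Y ((toNonemptyFintypeCat v (by omega)).obj X)) := by
  let n := Nat.card Y.obj
  refine ⟨⟨FintypeCat.of (ULift (Fin n → Fin v)), n, ⟨Equiv.ulift⟩⟩,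
    NonemptyFintypeCat.nonempty_retract_of_card_le ?_⟩
  calc n ≤ 2 ^ n := Nat.lt_two_pow_self.le
    _ ≤ v ^ n := Nat.pow_le_pow_left hv n
    _ = Nat.card (ULift.{u} (Fin n → Fin v)) := by simp
    _ = _ := (Nat.card_congr (FintypeCat.uSwitchEquiv (.of (ULift (Fin n → Fin v))))).symm

noncomputable def karoubiEquivalence {v : ℕ} (hv : 2 ≤ v) :
    Idempotents.Karoubi (PostCat.{u} v) ≌ Idempotents.Karoubi NonemptyFintypeCat.{0} :=
  Idempotents.karoubiEquivalenceOfRetracts (fullyFaithfulToNonemptyFintypeCat v _)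
    (exists_retract_toNonemptyFintypeCat_obj hv)

end PostCat

/-- For all integers `v, w ≥ 2`, the Karoubi envelopes (idempotent completions)
of the categories of finitely generated free Post algebras of valences `v` and
`w` are equivalent; in particular all the Lawvere theories `Post_v` are Morita
equivalent to the theory `Boole = Post_2` of Boolean algebras. -/
theorem karoubi_post_equiv_karoubi_post (v w : ℕ) (hv : 2 ≤ v) (hw : 2 ≤ w) :
    Nonempty (Idempotents.Karoubi (PostCat v) ≌ Idempotents.Karoubi (PostCat w)) :=
  ⟨(PostCat.karoubiEquivalence hv).trans (PostCat.karoubiEquivalence hw).symm⟩
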